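/- Let δ : (0,1] → [0,∞) be measurable and suppose that for every γ > 0 there exists t ∈ (0, 1) arbitrarily small with ∫_t^1 δ(r)/r dr ≤ γ·log(1/t). Then for every δ₀ > 0, the set S = {r ∈ (0,1] : δ(r) > δ₀} has lower density zero at 0; that is, liminf_{γ→0⁺} |S ∩ [0,γ]|/γ = 0. -/

import Mathlib

/-!
If `S = {δ > δ₀}` had lower density `> ε` at `0` on some `(0, c₀]`, then on each geometric block
`(ε/2 · c, c]` with `c = (ε/2)ᵏ c₀` the set `S` would occupy measure at least `ε/2 · c`, where
`δ(r)/r ≥ δ₀/c`; each block thus contributes at least `δ₀ ε/2` to `∫ δ(r)/r dr`. Since about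
`log(1/t) / log(2/ε)` blocks fit in `(t, 1]`, the integral grows at least like a fixed positive
multiple of `log(1/t)`, contradicting the hypothesis with a smaller multiple.
-/

open MeasureTheory Filter Topology Set

noncomputable def densityRatioAtZero (S : Set ℝ) (γ : ℝ) : ℝ :=
  (volume (S ∩ Icc 0 γ)).toReal / γ

section DensityRatio

variable {S : Set ℝ} {γ ε : ℝ}

lemma densityRatioAtZero_nonneg (hγ : 0 ≤ γ) : 0 ≤ densityRatioAtZero S γ :=
  div_nonneg ENNReal.toReal_nonneg hγ

lemma densityRatioAtZero_le_one (hγ : 0 ≤ γ) : densityRatioAtZero S γ ≤ 1 := by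
  refine div_le_one_of_le₀ (ENNReal.toReal_le_of_le_ofReal hγ ?_) hγ
  calc volume (S ∩ Icc 0 γ) ≤ volume (Icc 0 γ) := measure_mono inter_subset_right
    _ = ENNReal.ofReal γ := by rw [Real.volume_Icc, sub_zero]

lemma ofReal_mul_le_volume_of_le_densityRatioAtZero (hγ : 0 < γ)
    (h : ε ≤ densityRatioAtZero S γ) : ENNReal.ofReal (ε * γ) ≤ volume (S ∩ Icc 0 γ) := by
  rw [densityRatioAtZero, le_div_iff₀ hγ] at h
  exact ENNReal.ofReal_le_of_le_toReal h

lemma liminf_densityRatioAtZero_eq_zero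
    (h : ∀ ε ∈ Ioo (0 : ℝ) 1, ∃ᶠ γ in 𝓝[>] 0, densityRatioAtZero S γ ≤ ε) :
    liminf (densityRatioAtZero S) (𝓝[>] 0) = 0 := by
  have hnonneg : ∀ᶠ γ in 𝓝[>] (0 : ℝ), 0 ≤ densityRatioAtZero S γ :=
    eventually_nhdsWithin_of_forall fun _ hγ => densityRatioAtZero_nonneg (le_of_lt hγ)
  have hbdd : IsBoundedUnder (· ≤ ·) (𝓝[>] (0 : ℝ)) (densityRatioAtZero S) :=
    isBoundedUnder_of_eventually_le
      (eventually_nhdsWithin_of_forall fun _ hγ => densityRatioAtZero_le_one (le_of_lt hγ))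
  refine le_antisymm (le_of_forall_gt_imp_ge_of_dense fun a ha => ?_)
    (le_liminf_of_le hbdd.isCoboundedUnder_ge hnonneg)
  have hε : min a (1 / 2) ∈ Ioo (0 : ℝ) 1 :=
    ⟨lt_min ha (by norm_num), (min_le_right _ _).trans_lt (by norm_num)⟩
  exact (liminf_le_of_frequently_le (h _ hε) (isBoundedUnder_of_eventually_ge hnonneg)).trans
    (min_le_left _ _)

end DensityRatio

section Blocks

variable {S : Set ℝ} {δ : ℝ → ℝ} {δ₀ : ℝ}

lemma volume_inter_Icc_le_volume_inter_Ioc_add (S : Set ℝ) (a c : ℝ) :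
    volume (S ∩ Icc 0 c) ≤ volume (S ∩ Ioc a c) + ENNReal.ofReal a :=
  calc volume (S ∩ Icc 0 c) ≤ volume (S ∩ Ioc a c ∪ Icc 0 a) := by
        refine measure_mono fun r ⟨hrS, hr0, hrc⟩ => ?_
        rcases le_or_gt r a with hra | hra
        · exact Or.inr ⟨hr0, hra⟩
        · exact Or.inl ⟨hrS, hra, hrc⟩
    _ ≤ volume (S ∩ Ioc a c) + volume (Icc 0 a) := measure_union_le _ _
    _ = volume (S ∩ Ioc a c) + ENNReal.ofReal a := by rw [Real.volume_Icc, sub_zero]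

lemma ofReal_half_mul_le_volume_inter_Ioc {ε c : ℝ} (hε : 0 ≤ ε) (hc : 0 ≤ c)
    (h : ENNReal.ofReal (ε * c) ≤ volume (S ∩ Icc 0 c)) :
    ENNReal.ofReal (ε / 2 * c) ≤ volume (S ∩ Ioc (ε / 2 * c) c) := by
  have hhalf : 0 ≤ ε / 2 * c := by positivity
  refine ENNReal.le_of_add_le_add_right (a := ENNReal.ofReal (ε / 2 * c)) ENNReal.ofReal_ne_top ?_
  calc ENNReal.ofReal (ε / 2 * c) + ENNReal.ofReal (ε / 2 * c) = ENNReal.ofReal (ε * c) := by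
        rw [← ENNReal.ofReal_add hhalf hhalf]; congr 1; ring
    _ ≤ volume (S ∩ Icc 0 c) := h
    _ ≤ _ := volume_inter_Icc_le_volume_inter_Ioc_add S _ c

lemma ofReal_div_mul_volume_le_setLIntegral (hS : MeasurableSet S)
    (hδS : ∀ r ∈ S, δ₀ ≤ δ r) (hδ₀ : 0 ≤ δ₀) {a c : ℝ} (ha : 0 < a) :
    ENNReal.ofReal (δ₀ / c) * volume (S ∩ Ioc a c) ≤
      ∫⁻ r in S ∩ Ioc a c, ENNReal.ofReal (δ r / r) := by
  rw [← setLIntegral_const]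
  refine setLIntegral_mono' (hS.inter measurableSet_Ioc) fun r ⟨hrS, har, hrc⟩ => ?_
  exact ENNReal.ofReal_le_ofReal
    (div_le_div₀ (hδ₀.trans (hδS r hrS)) (hδS r hrS) (ha.trans har) hrc)

lemma ofReal_mul_half_le_setLIntegral_inter_Ioc (hS : MeasurableSet S)
    (hδS : ∀ r ∈ S, δ₀ ≤ δ r) (hδ₀ : 0 ≤ δ₀) {ε c : ℝ} (hε : 0 < ε) (hc : 0 < c)
    (h : ENNReal.ofReal (ε * c) ≤ volume (S ∩ Icc 0 c)) :
    ENNReal.ofReal (δ₀ * (ε / 2)) ≤ ∫⁻ r in S ∩ Ioc (ε / 2 * c) c, ENNReal.ofReal (δ r / r) :=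
  calc ENNReal.ofReal (δ₀ * (ε / 2))
      = ENNReal.ofReal (δ₀ / c) * ENNReal.ofReal (ε / 2 * c) := by
        rw [← ENNReal.ofReal_mul (by positivity)]; congr 1; field_simp
    _ ≤ ENNReal.ofReal (δ₀ / c) * volume (S ∩ Ioc (ε / 2 * c) c) := by
        gcongr; exact ofReal_half_mul_le_volume_inter_Ioc hε.le hc.le h
    _ ≤ _ := ofReal_div_mul_volume_le_setLIntegral hS hδS hδ₀ (by positivity)

lemma sum_setLIntegral_inter_Ioc_le {μ : Measure ℝ} {f : ℝ → ENNReal} (hS : MeasurableSet S)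
    {c : ℕ → ℝ} (hc : Antitone c) (n : ℕ) :
    ∑ k ∈ Finset.range n, ∫⁻ r in S ∩ Ioc (c (k + 1)) (c k), f r ∂μ ≤
      ∫⁻ r in Ioc (c n) (c 0), f r ∂μ := by
  have hdisj : (Finset.range n : Set ℕ).PairwiseDisjoint fun k => S ∩ Ioc (c (k + 1)) (c k) :=
    fun i _ j _ hij =>
      (hc.pairwise_disjoint_on_Ioc_succ hij).mono inter_subset_right inter_subset_right
  rw [← lintegral_biUnion_finset hdisj fun k _ => hS.inter measurableSet_Ioc]
  refine lintegral_mono_set (iUnion₂_subset fun k hk r ⟨_, hr, hr'⟩ =>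
    ⟨(hc ?_).trans_lt hr, hr'.trans (hc k.zero_le)⟩)
  exact Finset.mem_range.mp hk

lemma le_pow_floor_log_div_mul {q c₀ t : ℝ} (hq : 0 < q) (hq1 : q < 1) (ht : 0 < t)
    (htc : t ≤ c₀) : t ≤ q ^ ⌊Real.log (c₀ / t) / Real.log q⁻¹⌋₊ * c₀ := by
  set n := ⌊Real.log (c₀ / t) / Real.log q⁻¹⌋₊
  have hc₀ : 0 < c₀ := ht.trans_le htc
  have hL : 0 < Real.log q⁻¹ := Real.log_pos (one_lt_inv₀ hq |>.mpr hq1)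
  have hnL : n * Real.log q⁻¹ ≤ Real.log (c₀ / t) :=
    (le_div_iff₀ hL).mp (Nat.floor_le (div_nonneg (Real.log_nonneg
      ((one_le_div ht).mpr htc)) hL.le))
  have hpow : q⁻¹ ^ n * t ≤ c₀ := by
    rw [← le_div_iff₀ ht, ← Real.log_le_log_iff (by positivity) (by positivity), Real.log_pow]
    exact hnL
  calc t = q ^ n * (q⁻¹ ^ n * t) := by
        rw [← mul_assoc, ← mul_pow, mul_inv_cancel₀ hq.ne', one_pow, one_mul]
    _ ≤ q ^ n * c₀ := by gcongr

theorem ofReal_mul_log_sub_le_setLIntegral_Ioc (hS : MeasurableSet S)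
    (hδS : ∀ r ∈ S, δ₀ ≤ δ r) (hδ₀ : 0 ≤ δ₀) {ε c₀ t : ℝ} (hε : 0 < ε) (hε2 : ε < 2)
    (hc₀1 : c₀ ≤ 1) (hdense : ∀ γ ∈ Ioc 0 c₀, ENNReal.ofReal (ε * γ) ≤ volume (S ∩ Icc 0 γ))
    (ht : 0 < t) (htc : t ≤ c₀) :
    ENNReal.ofReal (δ₀ * (ε / 2) / Real.log (2 / ε) * (Real.log (c₀ / t) - Real.log (2 / ε))) ≤
      ∫⁻ r in Ioc t 1, ENNReal.ofReal (δ r / r) := by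
  set L := Real.log (2 / ε)
  have hL : 0 < L := Real.log_pos ((one_lt_div hε).mpr (by linarith))
  set n := ⌊Real.log (c₀ / t) / L⌋₊
  set c : ℕ → ℝ := fun k => (ε / 2) ^ k * c₀
  have hc₀ : 0 < c₀ := ht.trans_le htc
  have hc_pos : ∀ k, 0 < c k := fun k => by positivity
  have hc_zero : c 0 = c₀ := by simp [c]
  have hc_anti : Antitone c := fun j k hjk =>
    mul_le_mul_of_nonneg_right (pow_le_pow_of_le_one (by positivity) (by linarith) hjk) hc₀.le
  have hc_succ : ∀ k, c (k + 1) = ε / 2 * c k := fun k => by simp only [c]; ring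
  have htn : t ≤ c n := by
    have h := le_pow_floor_log_div_mul (by positivity) (by linarith : ε / 2 < 1) ht htc
    rwa [inv_div] at h
  calc ENNReal.ofReal (δ₀ * (ε / 2) / L * (Real.log (c₀ / t) - L))
      ≤ ENNReal.ofReal (δ₀ * (ε / 2) * n) := by
        refine ENNReal.ofReal_le_ofReal ?_
        rw [div_mul_eq_mul_div, mul_div_assoc]
        gcongr
        rw [sub_div, div_self hL.ne']
        linarith [Nat.lt_floor_add_one (Real.log (c₀ / t) / L)]
    _ = ∑ k ∈ Finset.range n, ENNReal.ofReal (δ₀ * (ε / 2)) := by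
        rw [Finset.sum_const, Finset.card_range, nsmul_eq_mul, mul_comm,
          ENNReal.ofReal_mul (by positivity), ENNReal.ofReal_natCast]
    _ ≤ ∑ k ∈ Finset.range n, ∫⁻ r in S ∩ Ioc (c (k + 1)) (c k), ENNReal.ofReal (δ r / r) :=
        Finset.sum_le_sum fun k _ => hc_succ k ▸ ofReal_mul_half_le_setLIntegral_inter_Ioc hS hδS
          hδ₀ hε (hc_pos k) (hdense _ ⟨hc_pos k, hc_zero ▸ hc_anti k.zero_le⟩)
    _ ≤ ∫⁻ r in Ioc (c n) (c 0), ENNReal.ofReal (δ r / r) :=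
        sum_setLIntegral_inter_Ioc_le hS hc_anti n
    _ ≤ _ := lintegral_mono_set (Ioc_subset_Ioc htn (hc_zero ▸ hc₀1))

end Blocks

lemma eventually_ofReal_half_mul_log_lt {κ c₀ C : ℝ} (hκ : 0 < κ) (hc₀ : 0 < c₀) :
    ∀ᶠ t in 𝓝[>] 0,
      ENNReal.ofReal (κ / 2 * Real.log (1 / t)) < ENNReal.ofReal (κ * (Real.log (c₀ / t) - C)) := by
  filter_upwards [self_mem_nhdsWithin, Real.tendsto_log_nhdsGT_zero.eventually
    (eventually_lt_atBot (min 0 (2 * (Real.log c₀ - C))))] with t (ht : 0 < t) hlog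
  rw [Real.log_div hc₀.ne' ht.ne', one_div, Real.log_inv]
  have hneg : Real.log t < 0 := hlog.trans_le (min_le_left _ _)
  have hmargin : 0 < Real.log c₀ - Real.log t / 2 - C := by
    linarith [hlog.trans_le (min_le_right _ _)]
  have hgap := mul_pos hκ hmargin
  rw [ENNReal.ofReal_lt_ofReal_iff (by nlinarith)]
  linarith

theorem extremizer_distortion_density_general (δ : ℝ → ℝ) (hδmeas : Measurable δ)
    (hsmall : ∀ γ > (0:ℝ), ∀ ε > (0:ℝ), ∃ t, 0 < t ∧ t < 1 ∧ t < ε ∧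
      (∫⁻ r in Set.Ioc t 1, ENNReal.ofReal (δ r / r))
        ≤ ENNReal.ofReal (γ * Real.log (1 / t))) :
    ∀ δ₀ > (0:ℝ),
      Filter.liminf
        (fun γ : ℝ =>
          (volume ({r ∈ Set.Ioc (0:ℝ) 1 | δ r > δ₀} ∩ Set.Icc 0 γ)).toReal / γ)
        (𝓝[>] (0:ℝ)) = 0 := by
  intro δ₀ hδ₀
  set S := {r ∈ Set.Ioc (0:ℝ) 1 | δ r > δ₀}
  have hS : MeasurableSet S := measurableSet_Ioc.inter (hδmeas measurableSet_Ioi)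
  refine liminf_densityRatioAtZero_eq_zero fun ε hε => ?_
  by_contra hsparse
  obtain ⟨c₀, hc₀, hc₀S⟩ := mem_nhdsGT_iff_exists_Ioc_subset.mp (not_frequently.mp hsparse)
  have hdense : ∀ γ ∈ Ioc 0 (min c₀ 1), ENNReal.ofReal (ε * γ) ≤ volume (S ∩ Icc 0 γ) :=
    fun γ hγ => ofReal_mul_le_volume_of_le_densityRatioAtZero hγ.1
      (not_le.mp (hc₀S ⟨hγ.1, hγ.2.trans (min_le_left _ _)⟩)).le
  set κ := δ₀ * (ε / 2) / Real.log (2 / ε)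
  have hκ : 0 < κ := div_pos (mul_pos hδ₀ (half_pos hε.1))
    (Real.log_pos ((one_lt_div hε.1).mpr (by linarith [hε.2])))
  have hgrowth : ∀ᶠ t in 𝓝[>] 0,
      ENNReal.ofReal (κ / 2 * Real.log (1 / t)) < ∫⁻ r in Ioc t 1, ENNReal.ofReal (δ r / r) := by
    filter_upwards [Ioc_mem_nhdsGT (lt_min hc₀ one_pos),
      eventually_ofReal_half_mul_log_lt hκ (lt_min hc₀ one_pos)] with t ht hlt
    exact hlt.trans_le (ofReal_mul_log_sub_le_setLIntegral_Ioc hS (fun r hr => hr.2.le) hδ₀.le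
      hε.1 (by linarith [hε.2]) (min_le_right _ _) hdense ht.1 ht.2)
  obtain ⟨ε', hε', hsub⟩ := mem_nhdsGT_iff_exists_Ioo_subset.mp hgrowth
  obtain ⟨t, ht0, -, htε', hint⟩ := hsmall (κ / 2) (half_pos hκ) ε' hε'
  exact (hsub ⟨ht0, htε'⟩).not_ge hint

theorem extremizer_distortion_density (δ : ℝ → ℝ) (hδmeas : Measurable δ)
    (hδnonneg : ∀ r ∈ Set.Ioc (0:ℝ) 1, 0 ≤ δ r)
    (hsmall : ∀ γ > (0:ℝ), ∀ ε > (0:ℝ), ∃ t, 0 < t ∧ t < 1 ∧ t < ε ∧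
      (∫⁻ r in Set.Ioc t 1, ENNReal.ofReal (δ r / r))
        ≤ ENNReal.ofReal (γ * Real.log (1 / t))) :
    ∀ δ₀ > (0:ℝ),
      Filter.liminf
        (fun γ : ℝ =>
          (volume ({r ∈ Set.Ioc (0:ℝ) 1 | δ r > δ₀} ∩ Set.Icc 0 γ)).toReal / γ)
        (𝓝[>] (0:ℝ)) = 0 :=
  extremizer_distortion_density_general δ hδmeas hsmall
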